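/- Let H be positive definite and B self-adjoint n×n complex matrices, set K = H^{-1/2} B H^{-1/2}. Then for every m ≥ 0, Tr[H^{-1/2} K^{2m} H^{-1/2}] ≤ ∑_{i=1}^n σ_{n+1−i}(H)^{−2m−1} σ_i(B)^{2m}, where σ_i denotes the i-th largest singular value. -/

import Mathlib

open Matrix Finset
open scoped ComplexOrder

/-- The singular values of a complex square matrix (in unspecified order). -/
noncomputable def sv {n : ℕ} (X : Matrix (Fin n) (Fin n) ℂ) : Fin n → ℝ :=
  fun i => Real.sqrt ((Matrix.posSemidef_conjTranspose_mul_self X).isHermitian.eigenvalues i)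

/-- Singular values arranged in increasing order. -/
noncomputable def svAsc {n : ℕ} (X : Matrix (Fin n) (Fin n) ℂ) : Fin n → ℝ :=
  sv X ∘ Tuple.sort (sv X)

/-- Singular values arranged in decreasing order. -/
noncomputable def svDesc {n : ℕ} (X : Matrix (Fin n) (Fin n) ℂ) : Fin n → ℝ :=
  fun i => svAsc X i.rev

/-- The p-th power of the p-Schatten norm: ‖X‖_p^p = ∑ σ_i(X)^p = Tr[(X*X)^{p/2}]. -/
noncomputable def schattenPow {n : ℕ} (p : ℝ) (X : Matrix (Fin n) (Fin n) ℂ) : ℝ :=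
  ∑ i, sv X i ^ p

/-- The inverse square root `H^{-1/2}` of a positive definite matrix. -/
noncomputable def invSqrt {n : ℕ} (H : Matrix (Fin n) (Fin n) ℂ) (hH : H.PosDef) :
    Matrix (Fin n) (Fin n) ℂ :=
  hH.inv.posSemidef.1.eigenvectorUnitary.1 *
    diagonal ((↑) ∘ (√·) ∘ hH.inv.posSemidef.1.eigenvalues) *
    (star hH.inv.posSemidef.1.eigenvectorUnitary : Matrix (Fin n) (Fin n) ℂ)

/-!
Write `R = H^{-1/2}`, so that `M := R K^{2m} R = H⁻¹ (B H⁻¹)^{2m}` is positive semidefinite.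
The `k`-th compound matrix `C_k` (all `k × k` minors) is multiplicative by Cauchy–Binet and
sends a unitary diagonalisation of a Hermitian matrix to one whose diagonal consists of the
`k`-fold products of its eigenvalues; so `‖C_k A‖` is the largest such product in modulus.
Hence the product of the `k` largest eigenvalues of `M` is at most
`‖C_k M‖ ≤ ‖C_k H⁻¹‖^{2m+1} ‖C_k B‖^{2m} = ∏_{i ≤ k} σ_{n+1-i}(H)^{-2m-1} σ_i(B)^{2m}`.
This log-majorization of the decreasing eigenvalues `a_i` of `M` by the terms `b_i` of the
bound gives `∑ a_i ≤ ∑ b_i`: sum `a_i - b_i ≤ a_i (log a_i - log b_i)` by parts, using that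
the `a_i` decrease.
-/

lemma exists_perm_of_map_univ_eq {α β : Type*} [Fintype α] {f g : α → β}
    (h : univ.val.map f = univ.val.map g) : ∃ σ : Equiv.Perm α, ∀ i, f i = g (σ i) := by
  classical
  have hcard (y : β) : Fintype.card {i // f i = y} = Fintype.card {i // g i = y} := by
    have := congrArg (Multiset.count y) h
    simp only [Multiset.count_map, Fintype.card_subtype, @eq_comm _ y] at this ⊢
    exact this
  let e (y : β) : {i // f i = y} ≃ {i // g i = y} := Fintype.equivOfCardEq (hcard y)
  refine ⟨(Equiv.sigmaFiberEquiv f).symm.trans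
    ((Equiv.sigmaCongrRight e).trans (Equiv.sigmaFiberEquiv g)), fun i => ?_⟩
  simp only [Equiv.trans_apply, Equiv.sigmaCongrRight_apply, Equiv.sigmaFiberEquiv_apply]
  exact (e (f i) ⟨i, rfl⟩).2.symm

lemma Fin.exists_perm_antitone_comp {α : Type*} [LinearOrder α] {n : ℕ} (f : Fin n → α) :
    ∃ τ : Equiv.Perm (Fin n), Antitone (f ∘ τ) :=
  ⟨Fin.revPerm.trans (Tuple.sort f),
    fun _ _ hij => Tuple.monotone_sort f (Fin.rev_le_rev.mpr hij)⟩

lemma mul_pow_mul_of_mul_self_eq {α : Type*} [Monoid α] {r p : α} (hr : r * r = p) (b : α)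
    (j : ℕ) : r * (r * b * r) ^ j * r = p * (b * p) ^ j := by
  rw [mul_assoc, mul_assoc r b, mul_pow_mul, ← mul_assoc, hr, mul_assoc b, hr]

lemma norm_mul_mul_pow_le {α : Type*} [SeminormedRing α] (a b : α) (j : ℕ) :
    ‖a * (b * a) ^ j‖ ≤ ‖a‖ ^ (j + 1) * ‖b‖ ^ j := by
  induction j with
  | zero => simp
  | succ j ih =>
    calc ‖a * (b * a) ^ (j + 1)‖ = ‖a * (b * a) ^ j * b * a‖ := by
          rw [pow_succ, ← mul_assoc, ← mul_assoc]
      _ ≤ ‖a * (b * a) ^ j‖ * ‖b‖ * ‖a‖ := norm_mul₃_le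
      _ ≤ ‖a‖ ^ (j + 1) * ‖b‖ ^ j * ‖b‖ * ‖a‖ := by gcongr
      _ = ‖a‖ ^ (j + 1 + 1) * ‖b‖ ^ (j + 1) := by ring

lemma sum_range_mul_nonpos_of_antitone {w d : ℕ → ℝ} {N : ℕ} (hw : Antitone w)
    (hw0 : ∀ i, 0 ≤ w i) (hd : ∀ k ≤ N, ∑ i ∈ range k, d i ≤ 0) :
    ∑ i ∈ range N, w i * d i ≤ 0 := by
  have hparts := sum_range_by_parts w d N
  simp only [smul_eq_mul] at hparts
  rw [hparts]
  have hlast : 0 ≤ w (N - 1) * -∑ i ∈ range N, d i :=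
    mul_nonneg (hw0 _) (neg_nonneg.mpr (hd N le_rfl))
  have hsteps : 0 ≤ ∑ i ∈ range (N - 1), (w (i + 1) - w i) * ∑ j ∈ range (i + 1), d j :=
    sum_nonneg fun i hi => mul_nonneg_of_nonpos_of_nonpos (sub_nonpos.mpr (hw i.le_succ))
      (hd _ (by have := mem_range.mp hi; omega))
  linarith

lemma sum_range_le_of_prod_range_le_of_pos {a b : ℕ → ℝ} {N : ℕ} (ha : Antitone a)
    (ha0 : ∀ i, 0 ≤ a i) (ha_pos : ∀ i < N, 0 < a i) (hb_pos : ∀ i < N, 0 < b i)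
    (h : ∀ k ≤ N, ∏ i ∈ range k, a i ≤ ∏ i ∈ range k, b i) :
    ∑ i ∈ range N, a i ≤ ∑ i ∈ range N, b i := by
  -- from `log x ≤ x - 1` at `x = b i / a i`
  have hterm : ∀ i ∈ range N, a i - b i ≤ a i * (Real.log (a i) - Real.log (b i)) := by
    intro i hi
    have hai := ha_pos i (mem_range.mp hi)
    have hbi := hb_pos i (mem_range.mp hi)
    have := Real.log_le_sub_one_of_pos (div_pos hbi hai)
    rw [Real.log_div hbi.ne' hai.ne', le_sub_iff_add_le, le_div_iff₀ hai] at this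
    nlinarith
  have hlog : ∀ k ≤ N, ∑ i ∈ range k, (Real.log (a i) - Real.log (b i)) ≤ 0 := by
    intro k hk
    have hpos : ∀ f : ℕ → ℝ, (∀ i < N, 0 < f i) → ∀ i ∈ range k, f i ≠ 0 :=
      fun f hf i hi => (hf i ((mem_range.mp hi).trans_le hk)).ne'
    rw [sum_sub_distrib, ← Real.log_prod (hpos a ha_pos), ← Real.log_prod (hpos b hb_pos),
      sub_nonpos]
    exact Real.log_le_log (prod_pos fun i hi => ha_pos i ((mem_range.mp hi).trans_le hk))
      (h k hk)
  have := (sum_le_sum hterm).trans (sum_range_mul_nonpos_of_antitone ha ha0 hlog)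
  rw [sum_sub_distrib] at this
  linarith

theorem sum_range_le_of_prod_range_le {a b : ℕ → ℝ} (ha : Antitone a) (ha0 : ∀ i, 0 ≤ a i)
    (hb0 : ∀ i, 0 ≤ b i) (h : ∀ k, ∏ i ∈ range k, a i ≤ ∏ i ∈ range k, b i) (N : ℕ) :
    ∑ i ∈ range N, a i ≤ ∑ i ∈ range N, b i := by
  induction N with
  | zero => simp
  | succ N ih =>
    rcases (ha0 N).eq_or_lt with haN | haN
    · rw [sum_range_succ, sum_range_succ, ← haN]
      linarith [hb0 N]
    have ha_pos : ∀ i < N + 1, 0 < a i := fun i hi => haN.trans_le (ha (Nat.le_of_lt_succ hi))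
    have hb_pos : ∀ i < N + 1, 0 < b i := by
      intro i hi
      refine (hb0 i).lt_of_ne fun hbi => ?_
      have hprod := h (i + 1)
      rw [prod_eq_zero (self_mem_range_succ i) hbi.symm] at hprod
      exact hprod.not_gt (prod_pos fun j hj => ha_pos j ((mem_range.mp hj).trans_le hi))
    exact sum_range_le_of_prod_range_le_of_pos ha ha0 ha_pos hb_pos fun k _ => h k

theorem Fin.sum_le_sum_of_prod_castLE_le {n : ℕ} {a b : Fin n → ℝ} (ha : Antitone a)
    (ha0 : ∀ i, 0 ≤ a i) (hb0 : ∀ i, 0 ≤ b i)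
    (h : ∀ k (hk : k ≤ n),
      ∏ i : Fin k, a (Fin.castLE hk i) ≤ ∏ i : Fin k, b (Fin.castLE hk i)) :
    ∑ i, a i ≤ ∑ i, b i := by
  let zeroExt (f : Fin n → ℝ) (i : ℕ) : ℝ := if hi : i < n then f ⟨i, hi⟩ else 0
  have zeroExt_fin (f : Fin n → ℝ) (i : Fin n) : zeroExt f i = f i := dif_pos i.2
  have zeroExt_nonneg {f : Fin n → ℝ} (hf : ∀ i, 0 ≤ f i) (i : ℕ) : 0 ≤ zeroExt f i := by
    unfold zeroExt; split_ifs <;> simp [hf]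
  have hprod (f : Fin n → ℝ) (k) (hk : k ≤ n) :
      ∏ i ∈ range k, zeroExt f i = ∏ i : Fin k, f (Fin.castLE hk i) := by
    rw [← Fin.prod_univ_eq_prod_range]
    exact prod_congr rfl fun i _ => dif_pos (i.2.trans_le hk)
  have hanti : Antitone (zeroExt a) := by
    intro i j hij
    by_cases hj : j < n
    · simp only [zeroExt, hj, dif_pos (hij.trans_lt hj)]
      exact ha hij
    · simp only [zeroExt, hj, dite_false]
      exact zeroExt_nonneg ha0 i
  have hprefix (k : ℕ) : ∏ i ∈ range k, zeroExt a i ≤ ∏ i ∈ range k, zeroExt b i := by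
    by_cases hk : k ≤ n
    · rw [hprod a k hk, hprod b k hk]
      exact h k hk
    · rw [prod_eq_zero (mem_range.mpr (not_le.mp hk)) (dif_neg (lt_irrefl n))]
      exact prod_nonneg fun i _ => zeroExt_nonneg hb0 i
  simpa only [← Fin.sum_univ_eq_sum_range, zeroExt_fin] using
    sum_range_le_of_prod_range_le hanti (zeroExt_nonneg ha0) (zeroExt_nonneg hb0) hprefix n

abbrev KSubset (ι : Type*) (k : ℕ) := {s : Finset ι // s.card = k}

namespace KSubset

variable {ι : Type*} [LinearOrder ι] {k : ℕ}

def emb (S : KSubset ι k) : Fin k ↪o ι := S.1.orderEmbOfFin S.2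

lemma emb_mem (S : KSubset ι k) (i : Fin k) : S.emb i ∈ S.1 :=
  S.1.orderEmbOfFin_mem S.2 i

lemma range_emb (S : KSubset ι k) : Set.range S.emb = S.1 :=
  S.1.range_orderEmbOfFin S.2

lemma image_emb (S : KSubset ι k) : univ.image S.emb = S.1 := by
  rw [← coe_inj, coe_image, coe_univ, Set.image_univ, range_emb]

lemma exists_perm_emb_comp_eq (r : Fin k ↪ ι) :
    ∃ (S : KSubset ι k) (σ : Equiv.Perm (Fin k)), S.emb ∘ σ = r := by
  classical
  let S : KSubset ι k := ⟨univ.map r, by simp⟩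
  have hr : ∀ i, r i ∈ S.1 := fun i => mem_map_of_mem r (mem_univ i)
  let g : Fin k → Fin k := fun i => (S.1.orderIsoOfFin S.2).symm ⟨r i, hr i⟩
  have hg : Function.Injective g := fun i j hij => r.injective <| by
    simpa [g] using congrArg (fun x => ((S.1.orderIsoOfFin S.2) x : ι)) hij
  refine ⟨S, Equiv.ofBijective g (Finite.injective_iff_bijective.mp hg), funext fun i => ?_⟩
  simp [g, emb, ← Finset.coe_orderIsoOfFin_apply]

lemma emb_comp_perm_injective :
    Function.Injective fun p : KSubset ι k × Equiv.Perm (Fin k) => p.1.emb ∘ p.2 := by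
  rintro ⟨S, σ⟩ ⟨T, τ⟩ h
  obtain rfl : S = T := by
    have := congrArg Set.range h
    simp only [EquivLike.range_comp, range_emb, coe_inj] at this
    exact Subtype.ext this
  simp only [Prod.mk.injEq, true_and]
  exact Equiv.ext fun i => S.emb.injective (congrFun h i)

lemma prod_le_prod_castLE {n : ℕ} {a : Fin n → ℝ} (ha : Antitone a) (ha0 : ∀ i, 0 ≤ a i)
    (S : KSubset (Fin n) k) (hk : k ≤ n) :
    ∏ x ∈ S.1, a x ≤ ∏ i : Fin k, a (Fin.castLE hk i) := by
  have hle (i : Fin k) : (i : ℕ) ≤ S.emb i := by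
    simpa using card_le_card_of_injOn S.emb (s := Iic i) (t := Iic (S.emb i))
      (fun j hj => by simpa using S.emb.monotone (by simpa using hj)) S.emb.injective.injOn
  rw [← S.image_emb, prod_image fun _ _ _ _ h => S.emb.injective h]
  exact prod_le_prod (fun i _ => ha0 _) fun i _ => ha (hle i)

end KSubset

namespace Matrix

section CauchyBinet

variable {R : Type*} [CommRing R] {ι : Type*} {k : ℕ}

lemma sum_perm_prod_mul_det_submatrix (A : Matrix (Fin k) ι R) (B : Matrix ι (Fin k) R)
    (e : Fin k → ι) :
    ∑ σ : Equiv.Perm (Fin k), (∏ i, A i (e (σ i))) * det (B.submatrix (e ∘ σ) id) =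
      det (A.submatrix id e) * det (B.submatrix e id) := by
  rw [← det_transpose (A.submatrix id e), det_apply', Finset.sum_mul]
  refine Finset.sum_congr rfl fun σ _ => ?_
  rw [show B.submatrix (e ∘ σ) id = (B.submatrix e id).submatrix σ id from rfl, det_permute]
  simp only [transpose_apply, submatrix_apply, id]
  ring

variable [Fintype ι]

lemma det_mul_eq_sum_prod_mul_det_submatrix (A : Matrix (Fin k) ι R)
    (B : Matrix ι (Fin k) R) :
    det (A * B) = ∑ r : Fin k → ι, (∏ i, A i (r i)) * det (B.submatrix r id) := by
  let D : (Fin k → R) [⋀^Fin k]→ₗ[R] R := detRowAlternating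
  have hrows : det (A * B) = D fun i => ∑ j, A i j • B j := by
    congr; ext i l; simp [mul_apply, Finset.sum_apply]
  refine hrows.trans ((D.toMultilinearMap.map_sum fun i j => A i j • B j).trans ?_)
  exact Finset.sum_congr rfl fun r _ => D.toMultilinearMap.map_smul_univ _ _

theorem det_mul_eq_sum_kSubset [LinearOrder ι] (A : Matrix (Fin k) ι R)
    (B : Matrix ι (Fin k) R) :
    det (A * B) =
      ∑ S : KSubset ι k, det (A.submatrix id S.emb) * det (B.submatrix S.emb id) := by
  simp_rw [← sum_perm_prod_mul_det_submatrix, ← Fintype.sum_prod_type',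
    det_mul_eq_sum_prod_mul_det_submatrix]
  symm
  -- only injective `r` contribute, and those are exactly the `S.emb ∘ σ`
  refine Finset.sum_bij_ne_zero (fun p _ _ => p.1.emb ∘ p.2) (fun _ _ _ => mem_univ _)
    (fun p _ _ q _ _ h => KSubset.emb_comp_perm_injective h) (fun r _ hr => ?_)
    (fun _ _ _ => rfl)
  have hinj : Function.Injective r := by
    by_contra hr'
    obtain ⟨i, j, hij, hne⟩ : ∃ i j, r i = r j ∧ i ≠ j := by
      simpa [Function.Injective, not_forall] using hr'
    exact hr (by rw [det_zero_of_row_eq hne (funext fun l => by simp [hij]), mul_zero])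
  obtain ⟨S, σ, h⟩ := KSubset.exists_perm_emb_comp_eq ⟨r, hinj⟩
  have h' : ∀ i, S.emb (σ i) = r i := congrFun h
  exact ⟨(S, σ), mem_univ _, by simpa only [Function.comp_def, h'] using hr, h⟩

end CauchyBinet

section Compound

variable {R : Type*} [CommRing R] {ι : Type*} [LinearOrder ι] {k : ℕ}

def compound (k : ℕ) (A : Matrix ι ι R) : Matrix (KSubset ι k) (KSubset ι k) R :=
  of fun S T => det (A.submatrix S.emb T.emb)

lemma compound_apply (A : Matrix ι ι R) (S T : KSubset ι k) :
    compound k A S T = det (A.submatrix S.emb T.emb) := rfl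

lemma compound_diagonal (d : ι → R) :
    compound k (diagonal d) = diagonal fun S : KSubset ι k => ∏ i ∈ S.1, d i := by
  ext S T
  rw [compound_apply]
  by_cases hST : S = T
  · subst hST
    rw [submatrix_diagonal _ _ S.emb.injective, det_diagonal, diagonal_apply_eq, ← S.image_emb,
      prod_image fun _ _ _ _ h => S.emb.injective h]
    rfl
  · obtain ⟨x, hxS, hxT⟩ : ∃ x ∈ S.1, x ∉ T.1 := by
      by_contra! h
      exact hST (Subtype.ext (eq_of_subset_of_card_le h (by rw [S.2, T.2])))
    obtain ⟨i, rfl⟩ : x ∈ Set.range S.emb := by rwa [S.range_emb]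
    rw [diagonal_apply_ne _ hST]
    refine det_eq_zero_of_row_eq_zero i fun j => diagonal_apply_ne _ fun h => hxT ?_
    exact h ▸ T.emb_mem j

lemma compound_one : compound k (1 : Matrix ι ι R) = 1 := by
  simpa using compound_diagonal (k := k) (1 : ι → R)

lemma compound_conjTranspose [StarRing R] (A : Matrix ι ι R) :
    compound k Aᴴ = (compound k A)ᴴ := by
  ext S T
  rw [conjTranspose_apply, compound_apply, compound_apply, ← det_conjTranspose,
    conjTranspose_submatrix]

variable [Fintype ι]

theorem compound_mul (A B : Matrix ι ι R) :
    compound k (A * B) = compound k A * compound k B := by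
  ext S T
  rw [compound_apply, submatrix_mul _ _ _ id _ Function.bijective_id, det_mul_eq_sum_kSubset,
    mul_apply]
  rfl

lemma compound_pow (A : Matrix ι ι R) (j : ℕ) : compound k (A ^ j) = compound k A ^ j := by
  induction j with
  | zero => exact compound_one
  | succ j ih => rw [pow_succ, pow_succ, compound_mul, ih]

lemma compound_mem_unitaryGroup [StarRing R] {U : Matrix ι ι R} (hU : U ∈ unitaryGroup ι R) :
    compound k U ∈ unitaryGroup (KSubset ι k) R := by
  rw [mem_unitaryGroup_iff, star_eq_conjTranspose, ← compound_conjTranspose, ← compound_mul,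
    ← star_eq_conjTranspose, mem_unitaryGroup_iff.mp hU, compound_one]

end Compound

namespace IsHermitian

variable {𝕜 : Type*} [RCLike 𝕜] {ι : Type*} [Fintype ι]

lemma re_trace_eq_sum_eigenvalues [DecidableEq ι] {A : Matrix ι ι 𝕜} (hA : A.IsHermitian) :
    RCLike.re A.trace = ∑ i, hA.eigenvalues i := by
  rw [hA.trace_eq_sum_eigenvalues, ← RCLike.ofReal_sum, RCLike.ofReal_re]

lemma posSemidef_mul_pow_two_mul_mul [DecidableEq ι] {R K : Matrix ι ι 𝕜} (hR : R.IsHermitian)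
    (hK : K.IsHermitian) (m : ℕ) : (R * K ^ (2 * m) * R).PosSemidef := by
  have h : R * K ^ (2 * m) * R = (K ^ m * R)ᴴ * (K ^ m * R) := by
    rw [conjTranspose_mul, hR.eq, (hK.pow m).eq, two_mul, pow_add]
    simp only [mul_assoc]
  rw [h]
  exact posSemidef_conjTranspose_mul_self _

lemma exists_perm_eigenvalues_eq_of_cfc_eq [DecidableEq ι] {A B : Matrix ι ι 𝕜}
    (hA : A.IsHermitian) {f : ℝ → ℝ} (hB : B.IsHermitian) (h : cfc f A = B) :
    ∃ σ : Equiv.Perm ι, ∀ i, hB.eigenvalues i = f (hA.eigenvalues (σ i)) := by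
  subst h
  have hroots := hB.roots_charpoly_eq_eigenvalues
  rw [hA.charpoly_cfc_eq, Polynomial.roots_prod _ _
    (prod_ne_zero_iff.mpr fun i _ => Polynomial.X_sub_C_ne_zero _)] at hroots
  simp only [Polynomial.roots_X_sub_C, Multiset.bind_singleton] at hroots
  have : univ.val.map hB.eigenvalues = univ.val.map (f ∘ hA.eigenvalues) := by
    refine Multiset.map_injective (RCLike.ofReal_injective (K := 𝕜)) ?_
    simpa [Multiset.map_map, Function.comp_def] using hroots.symm
  exact exists_perm_of_map_univ_eq this

section Norm

open scoped Matrix.Norms.L2Operator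

variable [LinearOrder ι] {k : ℕ} {A : Matrix ι ι 𝕜}

theorem norm_compound (hA : A.IsHermitian) :
    ‖compound k A‖ = ‖fun S : KSubset ι k => ∏ i ∈ S.1, (hA.eigenvalues i : 𝕜)‖ := by
  let V : unitary (Matrix (KSubset ι k) (KSubset ι k) 𝕜) :=
    ⟨_, compound_mem_unitaryGroup hA.eigenvectorUnitary.2⟩
  have hspec : compound k A = (V : Matrix _ _ 𝕜) *
      diagonal (fun S : KSubset ι k => ∏ i ∈ S.1, (hA.eigenvalues i : 𝕜)) *
      star (V : Matrix _ _ 𝕜) := by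
    conv_lhs => rw [hA.spectral_theorem, Unitary.conjStarAlgAut_apply]
    rw [compound_mul, compound_mul, compound_diagonal, star_eq_conjTranspose,
      star_eq_conjTranspose, compound_conjTranspose]
    rfl
  rw [hspec, ← Unitary.coe_star, CStarRing.norm_mul_coe_unitary, CStarRing.norm_coe_unitary_mul,
    l2_opNorm_diagonal]

lemma prod_eigenvalues_le_norm_compound (hA : A.IsHermitian) (S : KSubset ι k) :
    ∏ i ∈ S.1, hA.eigenvalues i ≤ ‖compound k A‖ := by
  rw [hA.norm_compound]
  refine (le_abs_self _).trans (le_of_eq_of_le ?_ (norm_le_pi_norm _ S))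
  rw [← RCLike.ofReal_prod, RCLike.norm_ofReal]

lemma norm_compound_le (hA : A.IsHermitian) {c : ℝ} (hc : 0 ≤ c)
    (h : ∀ S : KSubset ι k, |∏ i ∈ S.1, hA.eigenvalues i| ≤ c) : ‖compound k A‖ ≤ c := by
  rw [hA.norm_compound, pi_norm_le_iff_of_nonneg hc]
  intro S
  rw [← RCLike.ofReal_prod, RCLike.norm_ofReal]
  exact h S

end Norm

section Horn

open scoped Matrix.Norms.L2Operator

variable {n k : ℕ}

lemma norm_compound_le_prod_castLE {A : Matrix (Fin n) (Fin n) 𝕜} (hA : A.IsHermitian)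
    {a : Fin n → ℝ} (ha : Antitone a) (ha0 : ∀ i, 0 ≤ a i) {π : Equiv.Perm (Fin n)}
    (hπ : ∀ i, |hA.eigenvalues i| = a (π i)) (hk : k ≤ n) :
    ‖compound k A‖ ≤ ∏ i : Fin k, a (Fin.castLE hk i) := by
  refine hA.norm_compound_le (prod_nonneg fun i _ => ha0 _) fun S => ?_
  rw [abs_prod]
  simp_rw [hπ]
  refine le_of_eq_of_le (prod_map S.1 π.toEmbedding a).symm ?_
  exact KSubset.prod_le_prod_castLE ha ha0 ⟨S.1.map π.toEmbedding, by simp [S.2]⟩ hk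

/-- Horn's log-majorization for the product `P (B P)^j`, with `a`, `b` the decreasing
rearrangements of the moduli of the eigenvalues of `P`, `B`. -/
lemma prod_eigenvalues_mul_mul_pow_le {P B : Matrix (Fin n) (Fin n) 𝕜} (hP : P.IsHermitian)
    (hB : B.IsHermitian) {j : ℕ} (hM : (P * (B * P) ^ j).IsHermitian) {a b : Fin n → ℝ}
    (ha : Antitone a) (ha0 : ∀ i, 0 ≤ a i) (hb : Antitone b) (hb0 : ∀ i, 0 ≤ b i)
    {πa πb : Equiv.Perm (Fin n)} (hπa : ∀ i, |hP.eigenvalues i| = a (πa i))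
    (hπb : ∀ i, |hB.eigenvalues i| = b (πb i)) (S : KSubset (Fin n) k) (hk : k ≤ n) :
    ∏ x ∈ S.1, hM.eigenvalues x ≤
      ∏ i : Fin k, a (Fin.castLE hk i) ^ (j + 1) * b (Fin.castLE hk i) ^ j := by
  have hPk := hP.norm_compound_le_prod_castLE ha ha0 hπa hk
  have hBk := hB.norm_compound_le_prod_castLE hb hb0 hπb hk
  calc ∏ x ∈ S.1, hM.eigenvalues x ≤ ‖compound k (P * (B * P) ^ j)‖ :=
        hM.prod_eigenvalues_le_norm_compound S
    _ ≤ ‖compound k P‖ ^ (j + 1) * ‖compound k B‖ ^ j := by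
        rw [compound_mul, compound_pow, compound_mul]
        exact norm_mul_mul_pow_le _ _ _
    _ ≤ (∏ i : Fin k, a (Fin.castLE hk i)) ^ (j + 1) * (∏ i : Fin k, b (Fin.castLE hk i)) ^ j :=
        mul_le_mul (pow_le_pow_left₀ (norm_nonneg _) hPk _)
          (pow_le_pow_left₀ (norm_nonneg _) hBk _) (by positivity)
          (pow_nonneg (prod_nonneg fun i _ => ha0 _) _)
    _ = _ := by rw [prod_mul_distrib, prod_pow, prod_pow]

end Horn

end IsHermitian

end Matrix

section SingularValues

variable {n : ℕ}

lemma sv_nonneg (X : Matrix (Fin n) (Fin n) ℂ) (i : Fin n) : 0 ≤ sv X i :=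
  Real.sqrt_nonneg _

lemma monotone_svAsc (X : Matrix (Fin n) (Fin n) ℂ) : Monotone (svAsc X) :=
  Tuple.monotone_sort _

lemma antitone_svDesc (X : Matrix (Fin n) (Fin n) ℂ) : Antitone (svDesc X) :=
  fun _ _ hij => monotone_svAsc X (Fin.rev_le_rev.mpr hij)

lemma Matrix.IsHermitian.exists_perm_sv_eq_abs {A : Matrix (Fin n) (Fin n) ℂ}
    (hA : A.IsHermitian) : ∃ σ : Equiv.Perm (Fin n), ∀ i, sv A i = |hA.eigenvalues (σ i)| := by
  have hsq : cfc (fun x : ℝ => x ^ 2) A = Aᴴ * A :=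
    (cfc_pow_id A 2 hA).trans (by rw [hA.eq, sq])
  obtain ⟨σ, hσ⟩ := hA.exists_perm_eigenvalues_eq_of_cfc_eq
    (posSemidef_conjTranspose_mul_self A).isHermitian hsq
  exact ⟨σ, fun i => by rw [sv, hσ, Real.sqrt_sq_eq_abs]⟩

lemma Matrix.IsHermitian.exists_perm_abs_eigenvalues_eq_svDesc {A : Matrix (Fin n) (Fin n) ℂ}
    (hA : A.IsHermitian) : ∃ π : Equiv.Perm (Fin n), ∀ i, |hA.eigenvalues i| = svDesc A (π i) := by
  obtain ⟨σ, hσ⟩ := hA.exists_perm_sv_eq_abs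
  let τ : Equiv.Perm (Fin n) := Fin.revPerm.trans (Tuple.sort (sv A))
  refine ⟨σ.symm.trans τ.symm, fun i => ?_⟩
  change _ = sv A (τ (τ.symm (σ.symm i)))
  rw [Equiv.apply_symm_apply, hσ, Equiv.apply_symm_apply]

lemma Matrix.PosDef.exists_perm_eigenvalues_inv_eq_svAsc {H : Matrix (Fin n) (Fin n) ℂ}
    (hH : H.PosDef) :
    ∃ π : Equiv.Perm (Fin n), ∀ i, hH.inv.1.eigenvalues i = (svAsc H (π i))⁻¹ := by
  have hinv : cfc (fun x : ℝ => x⁻¹) H = H⁻¹ :=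
    (cfc_ringInverse_id H hH.isUnit hH.1).trans (nonsing_inv_eq_ringInverse H).symm
  obtain ⟨σ, hσ⟩ := hH.1.exists_perm_eigenvalues_eq_of_cfc_eq hH.inv.1 hinv
  obtain ⟨ρ, hρ⟩ := hH.1.exists_perm_sv_eq_abs
  refine ⟨σ.trans (ρ.symm.trans (Tuple.sort (sv H)).symm), fun i => ?_⟩
  change _ = (sv H (Tuple.sort (sv H) ((Tuple.sort (sv H)).symm (ρ.symm (σ i)))))⁻¹
  rw [Equiv.apply_symm_apply, hρ, Equiv.apply_symm_apply, abs_of_pos (hH.eigenvalues_pos _), hσ]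

end SingularValues

section InvSqrt

variable {n : ℕ} (H : Matrix (Fin n) (Fin n) ℂ) (hH : H.PosDef)

lemma invSqrt_eq_cfc : invSqrt H hH = cfc Real.sqrt H⁻¹ := by
  rw [hH.inv.1.cfc_eq, IsHermitian.cfc, Unitary.conjStarAlgAut_apply]
  rfl

lemma invSqrt_mul_self : invSqrt H hH * invSqrt H hH = H⁻¹ := by
  rw [invSqrt_eq_cfc, ← cfc_mul (R := ℝ) Real.sqrt Real.sqrt H⁻¹]
  refine (cfc_congr fun x hx => Real.mul_self_sqrt ?_).trans (cfc_id' ℝ H⁻¹ hH.inv.1)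
  rw [hH.inv.1.spectrum_real_eq_range_eigenvalues] at hx
  obtain ⟨i, rfl⟩ := hx
  exact hH.inv.posSemidef.eigenvalues_nonneg i

lemma isHermitian_invSqrt : (invSqrt H hH).IsHermitian := by
  rw [invSqrt_eq_cfc]
  exact cfc_predicate _ _

end InvSqrt

theorem trace_conjugated_even_power_bound {n : ℕ}
    (H B : Matrix (Fin n) (Fin n) ℂ) (hH : H.PosDef) (hB : B.IsHermitian) (m : ℕ) :
    ((invSqrt H hH *
        (invSqrt H hH * B * invSqrt H hH) ^ (2 * m) * invSqrt H hH).trace).re ≤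
      ∑ i : Fin n, (svAsc H i)⁻¹ ^ (2 * m + 1) * svDesc B i ^ (2 * m) := by
  have hR := isHermitian_invSqrt H hH
  have hM := hR.posSemidef_mul_pow_two_mul_mul
    (by simpa only [hR.eq] using isHermitian_conjTranspose_mul_mul (invSqrt H hH) hB) m
  rw [mul_pow_mul_of_mul_self_eq (invSqrt_mul_self H hH)] at hM ⊢
  obtain ⟨τ, hτ⟩ := Fin.exists_perm_antitone_comp hM.1.eigenvalues
  obtain ⟨πP, hπP⟩ := hH.exists_perm_eigenvalues_inv_eq_svAsc
  obtain ⟨πB, hπB⟩ := hB.exists_perm_abs_eigenvalues_eq_svDesc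
  have hsvAsc_pos (i : Fin n) : 0 < svAsc H i :=
    inv_pos.mp (by simpa [hπP] using hH.inv.eigenvalues_pos (πP.symm i))
  refine le_of_eq_of_le hM.1.re_trace_eq_sum_eigenvalues ?_
  rw [← Equiv.sum_comp τ]
  refine Fin.sum_le_sum_of_prod_castLE_le hτ (fun i => hM.eigenvalues_nonneg _)
    (fun i => mul_nonneg (pow_nonneg (inv_pos.2 (hsvAsc_pos i)).le _)
      (pow_nonneg (sv_nonneg B _) _)) fun k hk => ?_
  -- the indices of the `k` largest eigenvalues
  let S : KSubset (Fin n) k := ⟨univ.map ((Fin.castLEEmb hk).trans τ.toEmbedding), by simp⟩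
  have := hH.inv.1.prod_eigenvalues_mul_mul_pow_le hB hM.1
    (fun i j hij => inv_anti₀ (hsvAsc_pos i) (monotone_svAsc H hij))
    (fun i => (inv_pos.2 (hsvAsc_pos i)).le) (antitone_svDesc B) (fun i => sv_nonneg B _)
    (fun i => by rw [abs_of_pos (hH.inv.eigenvalues_pos i), hπP]) hπB S hk
  rwa [prod_map] at this
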